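/- arXiv:2305.04809 — 2 statements merged into one kernel-verified Lean document; each statement's English description precedes it below -/
import Mathlib

section
/- The function Q(x) = (√π/2)(e^{x²}/x)·erf(x) is strictly increasing on (0, ∞). -/
open MeasureTheory

/-- The error function erf(x) = (2/√π) ∫₀ˣ e^{-t²} dt. -/
noncomputable def erf (x : ℝ) : ℝ :=
  (2 / Real.sqrt Real.pi) * ∫ t in (0:ℝ)..x, Real.exp (-t^2)

/-- Q(x) = (√π/2)(e^{x²}/x)·erf(x). -/
noncomputable def Q (x : ℝ) : ℝ :=
  (Real.sqrt Real.pi / 2) * (Real.exp (x^2) / x) * erf x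

noncomputable def F (x : ℝ) : ℝ := ∫ t in (0:ℝ)..x, Real.exp (-t^2)

lemma cont_integrand : Continuous fun t : ℝ => Real.exp (-t^2) := by
  continuity

lemma F_hasDerivAt (x : ℝ) : HasDerivAt F (Real.exp (-x^2)) x :=
  (cont_integrand.integral_hasStrictDerivAt 0 x).hasDerivAt

lemma Q_hasDerivAt {x : ℝ} (hx : x ≠ 0) :
    HasDerivAt Q (Real.exp (x^2) * (2*x^2 - 1) / x^2 * F x + 1/x) x := by
  have hπ : (0:ℝ) < Real.sqrt Real.pi := Real.sqrt_pos.mpr Real.pi_pos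
  have hg : HasDerivAt (fun y : ℝ => Real.exp (y^2) / y)
      ((Real.exp (x^2) * (2*x) * x - Real.exp (x^2) * 1) / x^2) x := by
    have h1 : HasDerivAt (fun y : ℝ => Real.exp (y^2)) (Real.exp (x^2) * (2*x)) x := by
      have := (hasDerivAt_pow 2 x).exp
      simpa using this
    exact h1.div (hasDerivAt_id x) hx
  have herf : HasDerivAt erf ((2 / Real.sqrt Real.pi) * Real.exp (-x^2)) x := by
    have := (F_hasDerivAt x).const_mul (2 / Real.sqrt Real.pi)
    exact this
  have hQ : HasDerivAt Q
      ((Real.sqrt Real.pi / 2) * ((Real.exp (x^2) * (2*x) * x - Real.exp (x^2) * 1) / x^2) * erf x +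
        (Real.sqrt Real.pi / 2) * (Real.exp (x^2) / x) * ((2 / Real.sqrt Real.pi) * Real.exp (-x^2))) x := by
    exact ((hg.const_mul (Real.sqrt Real.pi / 2)).mul herf)
  convert hQ using 1
  have herfF : erf x = (2 / Real.sqrt Real.pi) * F x := rfl
  rw [herfF, Real.exp_neg]
  have hE := Real.exp_ne_zero (x^2)
  field_simp

/-- Q is strictly increasing on (0, ∞). -/
theorem Q_strictMonoOn : StrictMonoOn Q (Set.Ioi (0:ℝ)) := by
  apply strictMonoOn_of_deriv_pos (convex_Ioi 0)
  · intro x hx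
    exact (Q_hasDerivAt (ne_of_gt hx)).continuousAt.continuousWithinAt
  · intro x hx
    rw [interior_Ioi] at hx
    have hx0 : (0:ℝ) < x := hx
    rw [(Q_hasDerivAt hx0.ne').deriv]
    have hint : IntervalIntegrable (fun t : ℝ => Real.exp (-t^2)) volume 0 x :=
      cont_integrand.intervalIntegrable 0 x
    have hF0 : 0 < F x := by
      apply intervalIntegral.intervalIntegral_pos_of_pos_on hint _ hx0
      intro t _; exact Real.exp_pos _
    have hFx : F x ≤ x := by
      calc F x ≤ ∫ _ in (0:ℝ)..x, (1:ℝ) := by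
            apply intervalIntegral.integral_mono_on hx0.le hint intervalIntegrable_const
            intro t _
            exact Real.exp_le_one_iff.mpr (by nlinarith)
        _ = x := by simp
    have hx2 : (0:ℝ) < x^2 := by positivity
    rcases le_or_gt 1 (2*x^2) with h | h
    · have h1 : 0 ≤ Real.exp (x^2) * (2*x^2 - 1) / x^2 * F x :=
        mul_nonneg (div_nonneg (by nlinarith [Real.exp_pos (x^2)]) hx2.le) hF0.le
      have h2 : 0 < 1/x := by positivity
      linarith
    · have ha1 : Real.exp (x^2) * (1 - 2*x^2) < 1 := by
        have h3 : 1 - x^2 < Real.exp (-x^2) := by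
          have := Real.add_one_lt_exp (x := -x^2) (by nlinarith)
          linarith
        have hE : Real.exp (x^2) * Real.exp (-x^2) = 1 := by
          rw [← Real.exp_add]; simp
        nlinarith [Real.exp_pos (x^2)]
      have ha0 : 0 < Real.exp (x^2) * (1 - 2*x^2) := by
        have := Real.exp_pos (x^2); nlinarith
      have key : Real.exp (x^2) * (1 - 2*x^2) * F x < x := by
        calc Real.exp (x^2) * (1 - 2*x^2) * F x ≤ Real.exp (x^2) * (1 - 2*x^2) * x := by
              nlinarith
          _ < 1 * x := by nlinarith
          _ = x := one_mul x
      have heq : Real.exp (x^2) * (2*x^2 - 1) / x^2 * F x + 1/x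
          = (x - Real.exp (x^2) * (1 - 2*x^2) * F x) / x^2 := by
          field_simp
          ring
      rw [heq]
      exact div_pos (by linarith) hx2
end

section
/- Q'(x) > 0 for all x > 0, where Q'(x) = -(√π/2)(e^{x²}/x²)·erf(x) + √π·e^{x²}·erf(x) + 1/x. -/
open MeasureTheory

/-- The derivative expression of Q(x) = (√π/2)(e^{x²}/x)·erf(x):
Q'(x) = -(√π/2)(e^{x²}/x²)·erf(x) + √π·e^{x²}·erf(x) + 1/x. -/
noncomputable def Q' (x : ℝ) : ℝ :=
  -(Real.sqrt Real.pi / 2) * (Real.exp (x^2) / x^2) * erf x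
    + Real.sqrt Real.pi * Real.exp (x^2) * erf x + 1 / x

lemma aux_integral_le {x : ℝ} (hx : 0 ≤ x) :
    ∫ t in (0:ℝ)..x, Real.exp (-t^2) ≤ x := by
  have h := intervalIntegral.integral_mono_on (μ := volume)
    (f := fun t : ℝ => Real.exp (-t^2))
    (g := fun _ : ℝ => (1:ℝ)) hx
    ((Real.continuous_exp.comp (by continuity)).intervalIntegrable _ _)
    (intervalIntegrable_const)
    (fun t _ => by
      rw [Real.exp_le_one_iff]; nlinarith)
  simpa using h

lemma aux_integral_ge {x : ℝ} (hx : 0 ≤ x) :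
    x * Real.exp (-x^2) ≤ ∫ t in (0:ℝ)..x, Real.exp (-t^2) := by
  have h := intervalIntegral.integral_mono_on (μ := volume)
    (f := fun _ : ℝ => Real.exp (-x^2))
    (g := fun t : ℝ => Real.exp (-t^2)) hx
    (intervalIntegrable_const)
    ((Real.continuous_exp.comp (by continuity)).intervalIntegrable _ _)
    (fun t ht => by
      apply Real.exp_le_exp.2
      rcases ht with ⟨h0, h1⟩
      nlinarith)
  simpa using h

lemma erf_le {x : ℝ} (hx : 0 ≤ x) : erf x ≤ 2 * x / Real.sqrt Real.pi := by
  have hs : 0 < Real.sqrt Real.pi := Real.sqrt_pos.2 Real.pi_pos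
  unfold erf
  rw [div_mul_eq_mul_div, div_le_div_iff₀ hs hs]
  nlinarith [aux_integral_le hx]

lemma erf_ge {x : ℝ} (hx : 0 ≤ x) :
    2 * x * Real.exp (-x^2) / Real.sqrt Real.pi ≤ erf x := by
  have hs : 0 < Real.sqrt Real.pi := Real.sqrt_pos.2 Real.pi_pos
  unfold erf
  rw [div_mul_eq_mul_div]
  rw [div_le_div_iff₀ hs hs]
  have h := aux_integral_ge hx
  nlinarith [Real.exp_pos (-x^2)]

/-- Q'(x) > 0 for all x > 0. -/
theorem Q'_pos : ∀ x : ℝ, 0 < x → 0 < Q' x := by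
  intro x hx
  have hs : 0 < Real.sqrt Real.pi := Real.sqrt_pos.2 Real.pi_pos
  have hE : 0 < Real.exp (x^2) := Real.exp_pos _
  have hx2 : (0:ℝ) < x^2 := by positivity
  have hfge := erf_ge hx.le
  have hfpos : 0 < erf x := lt_of_lt_of_le (by positivity) hfge
  have hQ : Q' x = (-(Real.sqrt Real.pi / 2) * Real.exp (x^2) * erf x
      + Real.sqrt Real.pi * Real.exp (x^2) * erf x * x^2 + x) / x^2 := by
    unfold Q'
    field_simp
  rw [hQ]
  apply div_pos _ hx2
  rcases le_or_gt (1/2 : ℝ) (x^2) with h | h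
  · nlinarith [mul_pos (mul_pos hs hE) hfpos]
  · -- small x: use erf bounds and exp(x²) ≤ 1/(1-x²)
    have hfle := erf_le hx.le
    have hexp : Real.exp (x^2) * (1 - x^2) ≤ 1 := by
      have h1 : 1 - x^2 ≤ Real.exp (-x^2) := by
        have := Real.add_one_le_exp (-x^2); linarith
      have h2 : Real.exp (x^2) * Real.exp (-x^2) = 1 := by
        rw [← Real.exp_add]; simp
      nlinarith
    have hkey : Real.exp (x^2) < 1 + 2 * x^2 := by
      nlinarith [Real.exp_pos (x^2)]
    have hEinv : Real.exp (x^2) * Real.exp (-x^2) = 1 := by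
      rw [← Real.exp_add]; simp
    -- bound the two erf terms
    have h4 : erf x * Real.sqrt Real.pi ≤ 2 * x := (le_div_iff₀ hs).1 hfle
    have hb1 : -(Real.exp (x^2) * x) ≤ -(Real.sqrt Real.pi / 2) * Real.exp (x^2) * erf x := by
      nlinarith
    have h3 : 2 * x * Real.exp (-x^2) ≤ erf x * Real.sqrt Real.pi :=
      (div_le_iff₀ hs).1 hfge
    have h5 := mul_le_mul_of_nonneg_right h3 (mul_pos hE hx2).le
    have hprod : Real.exp (-x^2) * Real.exp (x^2) = 1 := by
      rw [← Real.exp_add]; simp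
    have heq : 2 * x * Real.exp (-x^2) * (Real.exp (x^2) * x^2) = 2 * x^3 := by
      linear_combination (2 * x * x^2) * hprod
    have hb2 : 2 * x^3 ≤ Real.sqrt Real.pi * Real.exp (x^2) * erf x * x^2 := by
      nlinarith [h5, heq]
    nlinarith
end
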